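/- Let the compact set A and lower semicontinuous kernel K satisfy assumptions (A1)-(A4). For each N ≥ 2 choose a configuration ω_N ∈ A^N and let ν_N be the probability measure assigning mass 1/N to each point of ω_N (counting multiplicities). If lim_{N→∞} P(ω_N) = W_K, then the measures ν_N converge weakly to μ_eq as N → ∞. -/

import Mathlib

/-!
Along a subsequence the counting measures `νₙ` converge weakly to a probability measure `ν`
(Prokhorov on the compact set `A`), so it suffices to show `ν = μeq`. By the portmanteau
inequality for lower semicontinuous integrands, `U^ν ≤ L := liminf U^{νₙ}`. Polarization gives
`L ≥ W` on `A`, while Fatou and `U^{μeq} ≡ W` give `∫ L dμeq ≤ W`; hence `U^ν ≤ W` `μeq`-a.e.,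
and then everywhere on `A = supp μeq` because `U^ν` is lower semicontinuous. Thus
`I[ν] ≤ W = I[μeq]`, and uniqueness of the energy minimiser gives `ν = μeq`.
-/

open MeasureTheory Filter Topology BoundedContinuousFunction NNReal ENNReal

noncomputable section

/-- The potential of a measure `μ` with respect to the kernel `K x y = f (nndist x y)`. -/
def potential {t : ℕ} (f : ℝ≥0 → ℝ≥0∞) (μ : Measure (EuclideanSpace ℝ (Fin t)))
    (x : EuclideanSpace ℝ (Fin t)) : ℝ≥0∞ :=
  ∫⁻ y, f (nndist x y) ∂μ

/-- The energy `I[μ] = ∫∫ K(x,y) dμ(x) dμ(y)`. -/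
def energy {t : ℕ} (f : ℝ≥0 → ℝ≥0∞) (μ : Measure (EuclideanSpace ℝ (Fin t))) : ℝ≥0∞ :=
  ∫⁻ x, potential f μ x ∂μ

/-- The normalized discrete potential `(1/N) ∑_{y ∈ ω} K(x,y)` of a configuration. -/
def discretePotential {t : ℕ} (f : ℝ≥0 → ℝ≥0∞) {N : ℕ}
    (ω : Fin N → EuclideanSpace ℝ (Fin t)) (x : EuclideanSpace ℝ (Fin t)) : ℝ≥0∞ :=
  (N : ℝ≥0∞)⁻¹ * ∑ i, f (nndist x (ω i))

/-- The polarization `P(ω) = min_{x ∈ A} (1/N) ∑_{y ∈ ω} K(x,y)` of a configuration. -/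
def polarization {t : ℕ} (f : ℝ≥0 → ℝ≥0∞) (A : Set (EuclideanSpace ℝ (Fin t))) {N : ℕ}
    (ω : Fin N → EuclideanSpace ℝ (Fin t)) : ℝ≥0∞ :=
  ⨅ x ∈ A, discretePotential f ω x

/-- The optimal `N`-point polarization `𝒫(A,N)`. -/
def maxPolarization {t : ℕ} (f : ℝ≥0 → ℝ≥0∞) (A : Set (EuclideanSpace ℝ (Fin t)))
    (N : ℕ) : ℝ≥0∞ :=
  ⨆ (ω : Fin N → EuclideanSpace ℝ (Fin t)) (_ : ∀ i, ω i ∈ A), polarization f A ω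

/-- The normalized counting measure of a configuration. -/
def countingMeasure {t : ℕ} {N : ℕ} (ω : Fin N → EuclideanSpace ℝ (Fin t)) :
    Measure (EuclideanSpace ℝ (Fin t)) :=
  (N : ℝ≥0∞)⁻¹ • ∑ i, Measure.dirac (ω i)

/-- Weak convergence of a sequence of measures: integrals of every bounded continuous
function converge. -/
def WeaklyTendsto {t : ℕ} (ν : ℕ → Measure (EuclideanSpace ℝ (Fin t)))
    (μ : Measure (EuclideanSpace ℝ (Fin t))) : Prop :=
  ∀ g : EuclideanSpace ℝ (Fin t) →ᵇ ℝ,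
    Tendsto (fun N => ∫ x, g x ∂(ν N)) atTop (𝓝 (∫ x, g x ∂μ))

section Semicontinuity

variable {Ω : Type*} [MeasurableSpace Ω] [TopologicalSpace Ω] [OpensMeasurableSpace Ω]

lemma lintegral_ofReal_le_liminf_lintegral_of_lowerSemicontinuous
    {μ : Measure Ω} {μs : ℕ → Measure Ω} {g : Ω → ℝ} (hg : LowerSemicontinuous g)
    (hg_nn : 0 ≤ g) (h_opens : ∀ G, IsOpen G → μ G ≤ atTop.liminf (fun i ↦ μs i G)) :
    ∫⁻ x, ENNReal.ofReal (g x) ∂μ ≤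
      atTop.liminf (fun i ↦ ∫⁻ x, ENNReal.ofReal (g x) ∂(μs i)) := by
  simp_rw [lintegral_eq_lintegral_meas_lt _ (Eventually.of_forall hg_nn)
    hg.measurable.aemeasurable]
  calc ∫⁻ t in Set.Ioi 0, μ {x | t < g x}
      ≤ ∫⁻ t in Set.Ioi 0, atTop.liminf (fun i ↦ μs i {x | t < g x}) :=
        lintegral_mono fun t ↦ h_opens _ (hg.isOpen_preimage t)
    _ ≤ atTop.liminf (fun i ↦ ∫⁻ t in Set.Ioi 0, μs i {x | t < g x}) :=
        lintegral_liminf_le fun i ↦ Antitone.measurable fun _ _ hst ↦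
          measure_mono fun _ hx ↦ lt_of_le_of_lt hst hx

/-- Reduced to the real-valued case through the continuous monotone truncations `min n ·`. -/
lemma lintegral_le_liminf_lintegral_of_lowerSemicontinuous
    {μ : Measure Ω} {μs : ℕ → Measure Ω} {g : Ω → ℝ≥0∞} (hg : LowerSemicontinuous g)
    (h_opens : ∀ G, IsOpen G → μ G ≤ atTop.liminf (fun i ↦ μs i G)) :
    ∫⁻ x, g x ∂μ ≤ atTop.liminf (fun i ↦ ∫⁻ x, g x ∂(μs i)) := by
  set gn : ℕ → Ω → ℝ := fun n x ↦ ENNReal.truncateToReal n (g x)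
  have ofReal_gn : ∀ n x, ENNReal.ofReal (gn n x) = min (n : ℝ≥0∞) (g x) := fun n x ↦
    ENNReal.ofReal_toReal (ne_top_of_le_ne_top (ENNReal.natCast_ne_top n) (min_le_left _ _))
  have gn_lsc : ∀ n, LowerSemicontinuous (gn n) := fun n ↦
    (ENNReal.continuous_truncateToReal (ENNReal.natCast_ne_top n)).comp_lowerSemicontinuous hg
      (ENNReal.monotone_truncateToReal (ENNReal.natCast_ne_top n))
  have iSup_gn : ∀ x, ⨆ n : ℕ, ENNReal.ofReal (gn n x) = g x := fun x ↦ by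
    simp only [ofReal_gn]
    rw [← iSup_inf_eq, ENNReal.iSup_natCast, top_inf_eq]
  calc ∫⁻ x, g x ∂μ = ⨆ n : ℕ, ∫⁻ x, ENNReal.ofReal (gn n x) ∂μ := by
        simp_rw [← iSup_gn]
        refine lintegral_iSup (fun n ↦ (gn_lsc n).measurable.ennreal_ofReal) fun m n hmn x ↦ ?_
        simp only [ofReal_gn]
        gcongr
    _ ≤ atTop.liminf (fun i ↦ ∫⁻ x, g x ∂(μs i)) := iSup_le fun n ↦
        (lintegral_ofReal_le_liminf_lintegral_of_lowerSemicontinuous (gn_lsc n)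
          (fun x ↦ ENNReal.toReal_nonneg) h_opens).trans <|
        liminf_le_liminf <| Eventually.of_forall fun i ↦ lintegral_mono fun x ↦ by
          rw [ofReal_gn]; exact min_le_right _ _

end Semicontinuity

lemma lowerSemicontinuous_lintegral {X α : Type*} [TopologicalSpace X]
    [FirstCountableTopology X] [MeasurableSpace α] {μ : Measure α} {F : X → α → ℝ≥0∞}
    (hF : ∀ y, LowerSemicontinuous (F · y)) (hF_meas : ∀ x, Measurable (F x)) :
    LowerSemicontinuous fun x ↦ ∫⁻ y, F x y ∂μ :=
  lowerSemicontinuous_iff_le_liminf.mpr fun x ↦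
    (lintegral_mono fun y ↦ lowerSemicontinuous_iff_le_liminf.mp (hF y) x).trans
      (lintegral_liminf_le hF_meas)

lemma LowerSemicontinuous.le_of_ae_le {X : Type*} [TopologicalSpace X] [MeasurableSpace X]
    [OpensMeasurableSpace X] {μ : Measure X} {g : X → ℝ≥0∞} (hg : LowerSemicontinuous g)
    {c : ℝ≥0∞} (hgc : ∀ᵐ x ∂μ, g x ≤ c) {x : X} (hx : ∀ U, IsOpen U → x ∈ U → 0 < μ U) :
    g x ≤ c := by
  by_contra! hcx
  have null : μ {y | c < g y} = 0 := by
    simpa only [ae_iff, not_le] using hgc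
  exact (hx _ (hg.isOpen_preimage c) hcx).ne' null

lemma ae_le_of_ae_le_of_lintegral_le {α : Type*} [MeasurableSpace α] {μ : Measure α}
    [IsProbabilityMeasure μ] {g : α → ℝ≥0∞} {c : ℝ≥0∞} (hg : AEMeasurable g μ)
    (hcg : ∀ᵐ x ∂μ, c ≤ g x) (hgc : ∫⁻ x, g x ∂μ ≤ c) : ∀ᵐ x ∂μ, g x ≤ c := by
  rcases eq_or_ne c ⊤ with rfl | hc
  · exact ae_of_all _ fun _ ↦ le_top
  have := ae_eq_of_ae_le_of_lintegral_le (f := fun _ ↦ c) hcg (by simpa using hc) hg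
    (by simpa using hgc)
  exact this.mono fun x hx ↦ hx.symm.le

lemma tendsto_of_forall_subseq_tendsto_eq {X : Type*} [TopologicalSpace X]
    [FirstCountableTopology X] {K : Set X} (hK : IsCompact K) {u : ℕ → X} (hu : ∀ n, u n ∈ K)
    {x : X} (h : ∀ ψ : ℕ → ℕ, StrictMono ψ → ∀ y, Tendsto (u ∘ ψ) atTop (𝓝 y) → y = x) :
    Tendsto u atTop (𝓝 x) :=
  hK.tendsto_nhds_of_unique_mapClusterPt (Eventually.of_forall hu) fun y _ hy ↦
    let ⟨ψ, hψ, hlim⟩ := hy.tendsto_subseq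
    h ψ hψ y hlim

section Configurations

variable {t N : ℕ}

instance isProbabilityMeasure_countingMeasure [NeZero N]
    (ω : Fin N → EuclideanSpace ℝ (Fin t)) : IsProbabilityMeasure (countingMeasure ω) := by
  constructor
  simp only [countingMeasure, Measure.smul_apply, Measure.finsetSum_apply, measure_univ,
    Finset.sum_const, Finset.card_univ, Fintype.card_fin, nsmul_eq_mul, mul_one, smul_eq_mul]
  exact ENNReal.inv_mul_cancel (NeZero.ne _) (ENNReal.natCast_ne_top N)

def countingProbabilityMeasure [NeZero N] (ω : Fin N → EuclideanSpace ℝ (Fin t)) :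
    ProbabilityMeasure (EuclideanSpace ℝ (Fin t)) :=
  ⟨countingMeasure ω, inferInstance⟩

@[simp]
lemma coe_countingProbabilityMeasure [NeZero N] (ω : Fin N → EuclideanSpace ℝ (Fin t)) :
    (countingProbabilityMeasure ω : Measure (EuclideanSpace ℝ (Fin t))) = countingMeasure ω :=
  rfl

lemma countingMeasure_compl_eq_zero {A : Set (EuclideanSpace ℝ (Fin t))}
    {ω : Fin N → EuclideanSpace ℝ (Fin t)} (hω : ∀ i, ω i ∈ A) : countingMeasure ω Aᶜ = 0 := by
  simp [countingMeasure, hω]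

lemma lintegral_countingMeasure (ω : Fin N → EuclideanSpace ℝ (Fin t))
    (g : EuclideanSpace ℝ (Fin t) → ℝ≥0∞) :
    ∫⁻ x, g x ∂countingMeasure ω = (N : ℝ≥0∞)⁻¹ * ∑ i, g (ω i) := by
  simp [countingMeasure]

lemma potential_countingMeasure (f : ℝ≥0 → ℝ≥0∞) (ω : Fin N → EuclideanSpace ℝ (Fin t)) :
    potential f (countingMeasure ω) = discretePotential f ω := by
  ext x
  exact lintegral_countingMeasure ω _

lemma measurable_discretePotential {f : ℝ≥0 → ℝ≥0∞} (hf : Measurable f)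
    (ω : Fin N → EuclideanSpace ℝ (Fin t)) : Measurable (discretePotential f ω) :=
  (Finset.measurable_sum _ fun _ _ ↦
    hf.comp (continuous_id.nndist continuous_const).measurable).const_mul _

lemma lintegral_discretePotential {f : ℝ≥0 → ℝ≥0∞} (hf : Measurable f)
    (μ : Measure (EuclideanSpace ℝ (Fin t))) (ω : Fin N → EuclideanSpace ℝ (Fin t)) :
    ∫⁻ x, discretePotential f ω x ∂μ = (N : ℝ≥0∞)⁻¹ * ∑ i, potential f μ (ω i) := by
  have hmeas : ∀ i, Measurable fun x ↦ f (nndist x (ω i)) := fun i ↦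
    hf.comp (continuous_id.nndist continuous_const).measurable
  simp only [discretePotential, potential]
  rw [lintegral_const_mul _ (Finset.measurable_sum _ fun i _ ↦ hmeas i),
    lintegral_finsetSum _ fun i _ ↦ hmeas i]
  simp only [nndist_comm]

lemma isCompact_closure_range_countingProbabilityMeasure {ι : Type*}
    {A : Set (EuclideanSpace ℝ (Fin t))} (hA : IsCompact A) {N : ι → ℕ} [∀ k, NeZero (N k)]
    (ω : ∀ k, Fin (N k) → EuclideanSpace ℝ (Fin t)) (hω : ∀ k i, ω k i ∈ A) :
    IsCompact (closure (Set.range fun k ↦ countingProbabilityMeasure (ω k))) := by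
  refine isCompact_closure_of_isTightMeasureSet <|
    isTightMeasureSet_iff_exists_isCompact_measure_compl_le.mpr fun ε _ ↦ ⟨A, hA, ?_⟩
  rintro _ ⟨_, ⟨k, rfl⟩, rfl⟩
  simp [countingMeasure_compl_eq_zero (hω k)]

end Configurations

section Potentials

variable {t : ℕ} {f : ℝ≥0 → ℝ≥0∞}

lemma lowerSemicontinuous_potential (hf : LowerSemicontinuous f)
    (μ : Measure (EuclideanSpace ℝ (Fin t))) : LowerSemicontinuous (potential f μ) :=
  lowerSemicontinuous_lintegral (fun _ ↦ hf.comp (continuous_id.nndist continuous_const))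
    fun _ ↦ hf.measurable.comp (continuous_const.nndist continuous_id).measurable

variable {A : Set (EuclideanSpace ℝ (Fin t))} {μ : Measure (EuclideanSpace ℝ (Fin t))}
  [IsProbabilityMeasure μ] {W : ℝ≥0∞}

lemma energy_le_of_potential_le (hμA : μ Aᶜ = 0) (h : ∀ x ∈ A, potential f μ x ≤ W) :
    energy f μ ≤ W :=
  calc energy f μ ≤ ∫⁻ _, W ∂μ := lintegral_mono_ae <| (ae_iff.mpr hμA).mono h
    _ = W := by simp

lemma energy_eq_of_potential_eq (hμA : μ Aᶜ = 0) (h : ∀ x ∈ A, potential f μ x = W) :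
    energy f μ = W :=
  calc energy f μ = ∫⁻ _, W ∂μ := lintegral_congr_ae <| (ae_iff.mpr hμA).mono h
    _ = W := by simp

end Potentials

section Limits

variable {t : ℕ} {A : Set (EuclideanSpace ℝ (Fin t))} {f : ℝ≥0 → ℝ≥0∞}
  {μ : Measure (EuclideanSpace ℝ (Fin t))} {W : ℝ≥0∞} {N : ℕ → ℕ}
  {ω : ∀ k, Fin (N k) → EuclideanSpace ℝ (Fin t)}
  {ν : ProbabilityMeasure (EuclideanSpace ℝ (Fin t))}

lemma potential_le_liminf_discretePotential [∀ k, NeZero (N k)] (hf : LowerSemicontinuous f)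
    (hν : Tendsto (fun k ↦ countingProbabilityMeasure (ω k)) atTop (𝓝 ν))
    (x : EuclideanSpace ℝ (Fin t)) :
    potential f ν x ≤ atTop.liminf fun k ↦ discretePotential f (ω k) x := by
  simp only [← potential_countingMeasure]
  exact lintegral_le_liminf_lintegral_of_lowerSemicontinuous (g := fun y ↦ f (nndist x y))
    (hf.comp (continuous_const.nndist continuous_id))
    fun G hG ↦ ProbabilityMeasure.le_liminf_measure_open_of_tendsto hν hG

lemma le_liminf_discretePotential
    (hpol : Tendsto (fun k ↦ polarization f A (ω k)) atTop (𝓝 W))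
    {x : EuclideanSpace ℝ (Fin t)} (hx : x ∈ A) :
    W ≤ atTop.liminf fun k ↦ discretePotential f (ω k) x :=
  hpol.liminf_eq ▸ liminf_le_liminf (Eventually.of_forall fun _ ↦ iInf₂_le x hx)

lemma lintegral_liminf_discretePotential_le [∀ k, NeZero (N k)] (hf : Measurable f)
    (hω : ∀ k i, ω k i ∈ A) (hμ : ∀ x ∈ A, potential f μ x = W) :
    ∫⁻ x, atTop.liminf (fun k ↦ discretePotential f (ω k) x) ∂μ ≤ W :=
  calc ∫⁻ x, atTop.liminf (fun k ↦ discretePotential f (ω k) x) ∂μ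
      ≤ atTop.liminf fun k ↦ ∫⁻ x, discretePotential f (ω k) x ∂μ :=
        lintegral_liminf_le fun k ↦ measurable_discretePotential hf (ω k)
    _ = W := by
        have hN : ∀ k, (N k : ℝ≥0∞)⁻¹ * (N k * W) = W := fun k ↦ by
          rw [← mul_assoc, ENNReal.inv_mul_cancel (NeZero.ne _) (ENNReal.natCast_ne_top _),
            one_mul]
        simp [lintegral_discretePotential hf, hμ _ (hω _ _), hN]

lemma potential_le_of_tendsto_countingProbabilityMeasure [∀ k, NeZero (N k)]
    [IsProbabilityMeasure μ] (hf : LowerSemicontinuous f) (hμA : μ Aᶜ = 0)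
    (hμ_pos : ∀ x ∈ A, ∀ U, IsOpen U → x ∈ U → 0 < μ U) (hμ : ∀ x ∈ A, potential f μ x = W)
    (hω : ∀ k i, ω k i ∈ A) (hpol : Tendsto (fun k ↦ polarization f A (ω k)) atTop (𝓝 W))
    (hν : Tendsto (fun k ↦ countingProbabilityMeasure (ω k)) atTop (𝓝 ν)) :
    ∀ x ∈ A, potential f ν x ≤ W := by
  have liminf_le : ∀ᵐ x ∂μ, atTop.liminf (fun k ↦ discretePotential f (ω k) x) ≤ W :=
    ae_le_of_ae_le_of_lintegral_le
      (Measurable.liminf fun k ↦ measurable_discretePotential hf.measurable (ω k)).aemeasurable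
      ((ae_iff.mpr hμA).mono fun _ hx ↦ le_liminf_discretePotential hpol hx)
      (lintegral_liminf_discretePotential_le hf.measurable hω hμ)
  exact fun x hx ↦ (lowerSemicontinuous_potential hf ν).le_of_ae_le
    (liminf_le.mono fun y hy ↦ (potential_le_liminf_discretePotential hf hν y).trans hy)
    (hμ_pos x hx)

lemma measure_compl_eq_zero_of_tendsto_countingProbabilityMeasure [∀ k, NeZero (N k)]
    (hA : IsClosed A) (hω : ∀ k i, ω k i ∈ A)
    (hν : Tendsto (fun k ↦ countingProbabilityMeasure (ω k)) atTop (𝓝 ν)) :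
    (ν : Measure (EuclideanSpace ℝ (Fin t))) Aᶜ = 0 := by
  refine (prob_compl_eq_zero_iff hA.measurableSet).mpr (le_antisymm prob_le_one ?_)
  have mass_one : ∀ k, countingMeasure (ω k) A = 1 := fun k ↦
    (prob_compl_eq_zero_iff hA.measurableSet).mp (countingMeasure_compl_eq_zero (hω k))
  simpa [mass_one] using ProbabilityMeasure.limsup_measure_closed_le_of_tendsto hν hA

end Limits

lemma eq_of_tendsto_countingProbabilityMeasure {t : ℕ} {A : Set (EuclideanSpace ℝ (Fin t))}
    (hA : IsClosed A) {f : ℝ≥0 → ℝ≥0∞} (hf : LowerSemicontinuous f)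
    {μ : Measure (EuclideanSpace ℝ (Fin t))} [IsProbabilityMeasure μ] (hμA : μ Aᶜ = 0)
    (hμ_min : ∀ ν : Measure (EuclideanSpace ℝ (Fin t)),
      IsProbabilityMeasure ν → ν Aᶜ = 0 → energy f μ ≤ energy f ν)
    (hμ_uniq : ∀ ν : Measure (EuclideanSpace ℝ (Fin t)),
      IsProbabilityMeasure ν → ν Aᶜ = 0 → energy f ν = energy f μ → ν = μ)
    (hμ_pos : ∀ x ∈ A, ∀ U, IsOpen U → x ∈ U → 0 < μ U)
    {W : ℝ≥0∞} (hμ : ∀ x ∈ A, potential f μ x = W)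
    {N : ℕ → ℕ} [∀ k, NeZero (N k)] {ω : ∀ k, Fin (N k) → EuclideanSpace ℝ (Fin t)}
    (hω : ∀ k i, ω k i ∈ A) (hpol : Tendsto (fun k ↦ polarization f A (ω k)) atTop (𝓝 W))
    {ν : ProbabilityMeasure (EuclideanSpace ℝ (Fin t))}
    (hν : Tendsto (fun k ↦ countingProbabilityMeasure (ω k)) atTop (𝓝 ν)) :
    (ν : Measure (EuclideanSpace ℝ (Fin t))) = μ := by
  have hνA := measure_compl_eq_zero_of_tendsto_countingProbabilityMeasure hA hω hν
  have energy_le : energy f (ν : Measure (EuclideanSpace ℝ (Fin t))) ≤ energy f μ :=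
    calc energy f (ν : Measure (EuclideanSpace ℝ (Fin t)))
        ≤ W := energy_le_of_potential_le hνA
          (potential_le_of_tendsto_countingProbabilityMeasure hf hμA hμ_pos hμ hω hpol hν)
      _ = energy f μ := (energy_eq_of_potential_eq hμA hμ).symm
  exact hμ_uniq ν inferInstance hνA (energy_le.antisymm (hμ_min ν inferInstance hνA))

theorem polarization_limit_implies_weak_convergence_general
    {t : ℕ} (A : Set (EuclideanSpace ℝ (Fin t))) (hA : IsCompact A)
    (f : ℝ≥0 → ℝ≥0∞) (hf : LowerSemicontinuous f)
    (μeq : Measure (EuclideanSpace ℝ (Fin t))) (hμeq : IsProbabilityMeasure μeq)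
    (hμeqA : μeq Aᶜ = 0)
    (hA2min : ∀ ν : Measure (EuclideanSpace ℝ (Fin t)),
      IsProbabilityMeasure ν → ν Aᶜ = 0 → energy f μeq ≤ energy f ν)
    (hA2uniq : ∀ ν : Measure (EuclideanSpace ℝ (Fin t)),
      IsProbabilityMeasure ν → ν Aᶜ = 0 → energy f ν = energy f μeq → ν = μeq)
    (hA3 : ∀ x ∈ A, ∀ U : Set (EuclideanSpace ℝ (Fin t)), IsOpen U → x ∈ U → 0 < μeq U)
    (W : ℝ≥0∞) (hA4 : ∀ x ∈ A, potential f μeq x = W)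
    (ω : (N : ℕ) → Fin N → EuclideanSpace ℝ (Fin t)) (hω : ∀ N, ∀ i, ω N i ∈ A)
    (hpol : Tendsto (fun N => polarization f A (ω N)) atTop (𝓝 W)) :
    WeaklyTendsto (fun N => countingMeasure (ω N)) μeq := by
  -- `ω 0` is the empty configuration, whose counting measure is `0`: shift by one
  set P : ℕ → ProbabilityMeasure (EuclideanSpace ℝ (Fin t)) :=
    fun n ↦ countingProbabilityMeasure (ω (n + 1))
  have hP : Tendsto P atTop (𝓝 ⟨μeq, hμeq⟩) := by
    refine tendsto_of_forall_subseq_tendsto_eq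
      (isCompact_closure_range_countingProbabilityMeasure hA _ fun n ↦ hω (n + 1))
      (fun n ↦ subset_closure ⟨n, rfl⟩) fun ψ hψ ν hν ↦ Subtype.ext ?_
    have hψ' : Tendsto (fun k ↦ ψ k + 1) atTop atTop :=
      (tendsto_add_atTop_nat 1).comp hψ.tendsto_atTop
    exact eq_of_tendsto_countingProbabilityMeasure hA.isClosed hf hμeqA hA2min hA2uniq hA3 hA4
      (N := fun k ↦ ψ k + 1) (fun k ↦ hω _) (hpol.comp hψ') hν
  exact fun g ↦ (tendsto_add_atTop_iff_nat 1).mp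
    (ProbabilityMeasure.tendsto_iff_forall_integral_tendsto.mp hP g)

theorem polarization_limit_implies_weak_convergence
    {t : ℕ} (A : Set (EuclideanSpace ℝ (Fin t))) (hA : IsCompact A)
    (f : ℝ≥0 → ℝ≥0∞) (hf : LowerSemicontinuous f)
    (μeq : Measure (EuclideanSpace ℝ (Fin t))) (hμeq : IsProbabilityMeasure μeq)
    (hμeqA : μeq Aᶜ = 0)
    (hA1 : ∃ μ : Measure (EuclideanSpace ℝ (Fin t)),
      IsProbabilityMeasure μ ∧ μ Aᶜ = 0 ∧ energy f μ < ⊤)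
    (hA2min : ∀ ν : Measure (EuclideanSpace ℝ (Fin t)),
      IsProbabilityMeasure ν → ν Aᶜ = 0 → energy f μeq ≤ energy f ν)
    (hA2uniq : ∀ ν : Measure (EuclideanSpace ℝ (Fin t)),
      IsProbabilityMeasure ν → ν Aᶜ = 0 → energy f ν = energy f μeq → ν = μeq)
    (hA3 : ∀ x ∈ A, ∀ U : Set (EuclideanSpace ℝ (Fin t)), IsOpen U → x ∈ U → 0 < μeq U)
    (W : ℝ≥0∞) (hW : 0 < W) (hA4 : ∀ x ∈ A, potential f μeq x = W)
    (ω : (N : ℕ) → Fin N → EuclideanSpace ℝ (Fin t)) (hω : ∀ N, ∀ i, ω N i ∈ A)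
    (hpol : Tendsto (fun N => polarization f A (ω N)) atTop (𝓝 W)) :
    WeaklyTendsto (fun N => countingMeasure (ω N)) μeq :=
  polarization_limit_implies_weak_convergence_general A hA f hf μeq hμeq hμeqA hA2min hA2uniq hA3 W
    hA4 ω hω hpol
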